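/- Consider the online strategy π₁ = μ₀, π_{t+1}(x) ∝ μ₀(x)exp(−βF_t(x)) with F_t = (1/(t+1))Σ_{s=1}^t f_s, and losses ℓ_t(ν) = β⟨ν,f_t⟩ + D(ν‖μ₀). Then for any ν ∈ P(X) and any T ≥ 1, Σ_{t=1}^T [ℓ_t(π_t) − ℓ_t(ν)] = Σ_{t=1}^T (t+1) D(π_t‖π_{t+1}) + D(ν‖μ₀) − (T+1)D(ν‖π_{T+1}). -/

import Mathlib

open Finset Real

noncomputable def gibbs {X : Type*} [Fintype X] (μ : X → ℝ) (f : X → ℝ) : X → ℝ :=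
  fun x => μ x * Real.exp (f x) / ∑ y, μ y * Real.exp (f y)

noncomputable def klDiv {X : Type*} [Fintype X] (ν ρ : X → ℝ) : ℝ :=
  ∑ x, ν x * Real.log (ν x / ρ x)

def IsProb {X : Type*} [Fintype X] (ν : X → ℝ) : Prop :=
  (∀ x, 0 ≤ ν x) ∧ ∑ x, ν x = 1

/-!
Write `π_{t+1} = μ₀ e^{-β F_t} / Z_t` and `S_t = (t+1) F_t = ∑_{s ≤ t} f_s`. For any `σ` of total
mass one, `(t+1) D(σ‖π_{t+1}) = (t+1) D(σ‖μ₀) + β⟨σ, S_t⟩ + (t+1) log Z_t`. Since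
`S_{t+1} - S_t = f_{t+1}`, the loss `ℓ_{t+1}(σ)` is the potential difference
`(t+2) D(σ‖π_{t+2}) - (t+1) D(σ‖π_{t+1})` up to a constant independent of `σ`. In
`ℓ_t(π_t) - ℓ_t(ν)` the constant cancels and `D(π_t‖π_t) = 0`, so summing over `t`
telescopes to the identity, with `π_1 = μ₀`.
-/

section Gibbs

variable {X : Type*} [Fintype X]

theorem klDiv_self (ν : X → ℝ) : klDiv ν ν = 0 := by
  refine sum_eq_zero fun x _ => ?_
  rcases eq_or_ne (ν x) 0 with h | h
  · simp [h]
  · simp [div_self h]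

variable [Nonempty X] {μ : X → ℝ}

theorem gibbs_partition_pos (hμ : ∀ x, 0 < μ x) (g : X → ℝ) : 0 < ∑ y, μ y * exp (g y) :=
  sum_pos (fun y _ => mul_pos (hμ y) (exp_pos _)) univ_nonempty

theorem sum_gibbs (hμ : ∀ x, 0 < μ x) (g : X → ℝ) : ∑ x, gibbs μ g x = 1 := by
  simp only [gibbs]
  rw [← sum_div, div_self (gibbs_partition_pos hμ g).ne']

theorem klDiv_gibbs (hμ : ∀ x, 0 < μ x) (g : X → ℝ) {σ : X → ℝ} (hσ : ∑ x, σ x = 1) :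
    klDiv σ (gibbs μ g) = klDiv σ μ - ∑ x, σ x * g x + log (∑ y, μ y * exp (g y)) := by
  set Z := ∑ y, μ y * exp (g y) with hZdef
  have hZ : Z ≠ 0 := (gibbs_partition_pos hμ g).ne'
  have hterm : ∀ x, σ x * log (σ x / gibbs μ g x) =
      σ x * log (σ x / μ x) - σ x * g x + σ x * log Z := by
    intro x
    rcases eq_or_ne (σ x) 0 with h | h
    · simp [h]
    have hμx : μ x ≠ 0 := (hμ x).ne'
    have hratio : σ x / gibbs μ g x = σ x / μ x * Z / exp (g x) := by
      simp only [gibbs, ← hZdef]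
      field_simp
    rw [hratio, log_div (by positivity) (exp_ne_zero _), log_mul (by positivity) hZ, log_exp]
    ring
  simp only [klDiv, hterm, sum_add_distrib, sum_sub_distrib, ← sum_mul, hσ, one_mul]

end Gibbs

section Strategy

variable {X : Type*} [Fintype X]

/-- The paper's `π_{t+1}`: the Gibbs measure of `μ₀` at the averaged loss `F_t`. -/
noncomputable def gibbsStrategy (μ₀ : X → ℝ) (β : ℝ) (f : ℕ → X → ℝ) (t : ℕ) : X → ℝ :=
  gibbs μ₀ (fun x => -β * ((1 / ((t : ℝ) + 1)) * ∑ s ∈ Icc 1 t, f s x))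

theorem gibbsStrategy_zero {μ₀ : X → ℝ} (hsum : ∑ x, μ₀ x = 1) (β : ℝ) (f : ℕ → X → ℝ) :
    gibbsStrategy μ₀ β f 0 = μ₀ := by
  funext x
  simp [gibbsStrategy, gibbs, hsum]

variable [Nonempty X] {μ₀ : X → ℝ}

theorem exists_mul_klDiv_gibbsStrategy (hμ₀ : ∀ x, 0 < μ₀ x) (β : ℝ) (f : ℕ → X → ℝ) (t : ℕ) :
    ∃ c, ∀ σ : X → ℝ, ∑ x, σ x = 1 →
      ((t : ℝ) + 1) * klDiv σ (gibbsStrategy μ₀ β f t) =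
        ((t : ℝ) + 1) * klDiv σ μ₀ + β * ∑ x, σ x * ∑ s ∈ Icc 1 t, f s x + c := by
  refine ⟨((t : ℝ) + 1) *
    log (∑ y, μ₀ y * exp (-β * ((1 / ((t : ℝ) + 1)) * ∑ s ∈ Icc 1 t, f s y))), fun σ hσ => ?_⟩
  have hpairing : ∑ x, σ x * (-β * ((1 / ((t : ℝ) + 1)) * ∑ s ∈ Icc 1 t, f s x)) =
      -(β / ((t : ℝ) + 1)) * ∑ x, σ x * ∑ s ∈ Icc 1 t, f s x := by
    rw [mul_sum]
    exact sum_congr rfl fun x _ => by ring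
  rw [gibbsStrategy, klDiv_gibbs hμ₀ _ hσ, hpairing]
  field_simp
  ring

theorem exists_loss_eq_klDiv_gibbsStrategy_sub (hμ₀ : ∀ x, 0 < μ₀ x) (β : ℝ) (f : ℕ → X → ℝ)
    (t : ℕ) :
    ∃ c, ∀ σ : X → ℝ, ∑ x, σ x = 1 →
      β * ∑ x, σ x * f (t + 1) x + klDiv σ μ₀ =
        ((t : ℝ) + 2) * klDiv σ (gibbsStrategy μ₀ β f (t + 1))
          - ((t : ℝ) + 1) * klDiv σ (gibbsStrategy μ₀ β f t) - c := by
  obtain ⟨c, hc⟩ := exists_mul_klDiv_gibbsStrategy hμ₀ β f t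
  obtain ⟨c', hc'⟩ := exists_mul_klDiv_gibbsStrategy hμ₀ β f (t + 1)
  refine ⟨c' - c, fun σ hσ => ?_⟩
  have hcum : ∑ x, σ x * ∑ s ∈ Icc 1 (t + 1), f s x =
      ∑ x, σ x * ∑ s ∈ Icc 1 t, f s x + ∑ x, σ x * f (t + 1) x := by
    simp only [sum_Icc_succ_top (Nat.le_add_left 1 t), mul_add, sum_add_distrib]
  have h := hc' σ hσ
  push_cast at h
  rw [show (t : ℝ) + 2 = (t : ℝ) + 1 + 1 by ring, h, hc σ hσ, hcum]
  ring

theorem regret_step (hμ₀ : ∀ x, 0 < μ₀ x) (β : ℝ) (f : ℕ → X → ℝ) (t : ℕ) {ν : X → ℝ}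
    (hν : ∑ x, ν x = 1) :
    β * ∑ x, gibbsStrategy μ₀ β f t x * f (t + 1) x + klDiv (gibbsStrategy μ₀ β f t) μ₀
        - (β * ∑ x, ν x * f (t + 1) x + klDiv ν μ₀) =
      ((t : ℝ) + 2) * klDiv (gibbsStrategy μ₀ β f t) (gibbsStrategy μ₀ β f (t + 1))
        + (((t : ℝ) + 1) * klDiv ν (gibbsStrategy μ₀ β f t)
          - ((t : ℝ) + 2) * klDiv ν (gibbsStrategy μ₀ β f (t + 1))) := by
  obtain ⟨c, hc⟩ := exists_loss_eq_klDiv_gibbsStrategy_sub hμ₀ β f t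
  rw [hc ν hν, hc (gibbsStrategy μ₀ β f t) (sum_gibbs hμ₀ _), klDiv_self]
  ring

end Strategy

theorem regret_telescoping_identity_general {X : Type*} [Fintype X] [Nonempty X]
    (μ₀ : X → ℝ) (hpos : ∀ x, 0 < μ₀ x) (hsum : ∑ x, μ₀ x = 1)
    (β : ℝ) (f : ℕ → X → ℝ)
    (F : ℕ → X → ℝ) (hF : ∀ t x, F t x = (1 / ((t : ℝ) + 1)) * ∑ s ∈ Finset.Icc 1 t, f s x)
    (p : ℕ → X → ℝ) (hp : ∀ t : ℕ, 1 ≤ t → p t = gibbs μ₀ (fun x => -β * F (t - 1) x))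
    (ℓ : ℕ → (X → ℝ) → ℝ)
    (hℓ : ∀ t ν, ℓ t ν = β * (∑ x, ν x * f t x) + klDiv ν μ₀)
    (ν : X → ℝ) (hν : IsProb ν) (T : ℕ) :
    ∑ t ∈ Finset.Icc 1 T, (ℓ t (p t) - ℓ t ν) =
      (∑ t ∈ Finset.Icc 1 T, ((t : ℝ) + 1) * klDiv (p t) (p (t + 1)))
        + klDiv ν μ₀ - ((T : ℝ) + 1) * klDiv ν (p (T + 1)) := by
  have hp' : ∀ t, p (t + 1) = gibbsStrategy μ₀ β f t := fun t => by
    simp only [hp (t + 1) (Nat.le_add_left 1 t), Nat.add_sub_cancel, hF, gibbsStrategy]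
  induction T with
  | zero => simp [hp' 0, gibbsStrategy_zero hsum]
  | succ T ih =>
    rw [sum_Icc_succ_top (Nat.le_add_left 1 T), ih, sum_Icc_succ_top (Nat.le_add_left 1 T), hℓ,
      hℓ, hp', hp']
    have hstep := regret_step hpos β f T hν.2
    push_cast
    linarith

/-- Exact telescoping regret identity for the strategy `p_{t+1} ∝ μ₀ exp(−β F_t)`:
for any `ν ∈ P(X)` and `T ≥ 1`,
`∑_{t=1}^T [ℓ_t(p_t) − ℓ_t(ν)] = ∑_{t=1}^T (t+1) D(p_t‖p_{t+1}) + D(ν‖μ₀) − (T+1)D(ν‖p_{T+1})`. -/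
theorem regret_telescoping_identity {X : Type*} [Fintype X] [Nonempty X]
    (μ₀ : X → ℝ) (hpos : ∀ x, 0 < μ₀ x) (hsum : ∑ x, μ₀ x = 1)
    (β : ℝ) (hβ : 0 < β) (f : ℕ → X → ℝ)
    (F : ℕ → X → ℝ) (hF : ∀ t x, F t x = (1 / ((t : ℝ) + 1)) * ∑ s ∈ Finset.Icc 1 t, f s x)
    (p : ℕ → X → ℝ) (hp : ∀ t : ℕ, 1 ≤ t → p t = gibbs μ₀ (fun x => -β * F (t - 1) x))
    (ℓ : ℕ → (X → ℝ) → ℝ)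
    (hℓ : ∀ t ν, ℓ t ν = β * (∑ x, ν x * f t x) + klDiv ν μ₀)
    (ν : X → ℝ) (hν : IsProb ν) (T : ℕ) (hT : 1 ≤ T) :
    ∑ t ∈ Finset.Icc 1 T, (ℓ t (p t) - ℓ t ν) =
      (∑ t ∈ Finset.Icc 1 T, ((t : ℝ) + 1) * klDiv (p t) (p (t + 1)))
        + klDiv ν μ₀ - ((T : ℝ) + 1) * klDiv ν (p (T + 1)) :=
  regret_telescoping_identity_general μ₀ hpos hsum β f F hF p hp ℓ hℓ ν hν T
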